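/- Assume (A₁). Then for all 1 ≤ i, j ≤ q, the (i,j) d×d block of the Schur complement S = H − K L⁻¹ Kᵗ equals Σ_{ℓ=1}^∞ P_{p−i+ℓ} Γ P_{p−j+ℓ}ᵗ (the series converging absolutely). In particular, S is positive semidefinite. -/

import Mathlib

open MeasureTheory ProbabilityTheory Filter Matrix Finset
open scoped Topology Kronecker

noncomputable section

abbrev Mat (d : ℕ) := Matrix (Fin d) (Fin d) ℝ

/-- The index set for the regression vector `Φ_n`:
`p` blocks of size `d` (past outputs) followed by `q` blocks of size `d` (past inputs). -/
abbrev RegIdx (d p q : ℕ) := (Fin p × Fin d) ⊕ (Fin q × Fin d)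

/-- The matrix polynomial `B(z) = I + B₁ z + ⋯ + B_q z^q`, over `ℂ`. -/
def Bpoly {d : ℕ} (B : ℕ → Mat d) (q : ℕ) (z : ℂ) : Matrix (Fin d) (Fin d) ℂ :=
  1 + ∑ j ∈ Finset.Icc 1 q, z ^ j • (B j).map (fun r => (r : ℂ))

/-- Causality assumption (A₁): `det B(z) ≠ 0` for all `|z| ≤ 1`. -/
def Causal {d : ℕ} (B : ℕ → Mat d) (q : ℕ) : Prop :=
  ∀ z : ℂ, ‖z‖ ≤ 1 → (Bpoly B q z).det ≠ 0

/-- `P` is the coefficient sequence of the formal power series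
`B(z)⁻¹ (A(z) - I) = ∑_{k ≥ 1} P_k z^k`, expressed through the coefficient
identities of `B(z) · (∑ P_k z^k) = A(z) - I`, where `A(z) = I - ∑_{k=1}^p A_k z^k`
is encoded by `A : ℕ → Mat d` supported on `{1, …, p}` (so the coefficient of
`A(z) - I` at `z^k`, `k ≥ 1`, is `-(A k)`). The convention `P_m = 0` for `m ≤ 0`
is realized by `P 0 = 0` together with truncated subtraction on `ℕ`. -/
def IsPSeq {d : ℕ} (A B : ℕ → Mat d) (q : ℕ) (P : ℕ → Mat d) : Prop :=
  P 0 = 0 ∧ ∀ k, 1 ≤ k → P k + ∑ j ∈ Finset.Icc 1 q, B j * P (k - j) = -(A k)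

/-- The `dq × dq` matrix `Π` whose `(i,j)` block (`1 ≤ i, j ≤ q`) is `P_{p+j-i}`. -/
def PiMat {d : ℕ} (P : ℕ → Mat d) (p q : ℕ) :
    Matrix (Fin q × Fin d) (Fin q × Fin d) ℝ :=
  fun ia jb => P (p + (jb.1 : ℕ) - (ia.1 : ℕ)) ia.2 jb.2

/-- `H_i = ∑_{k=i}^∞ P_k Γ P_{k-i+1}ᵗ`. -/
def Hmat {d : ℕ} (P : ℕ → Mat d) (Γ : Mat d) (i : ℕ) : Mat d :=
  ∑' m : ℕ, P (i + m) * Γ * (P (m + 1))ᵀ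

/-- The `dq × dq` matrix `H` with `(i,j)` block `H_{j-i+1}` if `j ≥ i` and `H_{i-j+1}ᵗ` else. -/
def Hblk {d : ℕ} (P : ℕ → Mat d) (Γ : Mat d) (q : ℕ) :
    Matrix (Fin q × Fin d) (Fin q × Fin d) ℝ :=
  fun ia jb =>
    if (ia.1 : ℕ) ≤ (jb.1 : ℕ) then Hmat P Γ ((jb.1 : ℕ) - (ia.1 : ℕ) + 1) ia.2 jb.2
    else Hmat P Γ ((ia.1 : ℕ) - (jb.1 : ℕ) + 1) jb.2 ia.2

/-- The `dq × dp` matrix `K` with `(i,j)` block `P_{j-i} Γ` if `j > i` and `0` else. -/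
def Kblk {d : ℕ} (P : ℕ → Mat d) (Γ : Mat d) (p q : ℕ) :
    Matrix (Fin q × Fin d) (Fin p × Fin d) ℝ :=
  fun ia jb =>
    if (ia.1 : ℕ) < (jb.1 : ℕ) then (P ((jb.1 : ℕ) - (ia.1 : ℕ)) * Γ) ia.2 jb.2 else 0

/-- The `dp × dp` block-diagonal matrix `L = diag(Γ, …, Γ)`. -/
def Lblk {d : ℕ} (Γ : Mat d) (p : ℕ) : Matrix (Fin p × Fin d) (Fin p × Fin d) ℝ :=
  fun ia jb => if ia.1 = jb.1 then Γ ia.2 jb.2 else 0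

/-- The limiting matrix `Λ = [[L, Kᵗ], [K, H]]`. -/
def Lam {d : ℕ} (P : ℕ → Mat d) (Γ : Mat d) (p q : ℕ) :
    Matrix (RegIdx d p q) (RegIdx d p q) ℝ :=
  Matrix.fromBlocks (Lblk Γ p) (Kblk P Γ p q)ᵀ (Kblk P Γ p q) (Hblk P Γ q)

/-- The Schur complement `S = H - K L⁻¹ Kᵗ` of `L` in `Λ`. -/
def SchurS {d : ℕ} (P : ℕ → Mat d) (Γ : Mat d) (p q : ℕ) :
    Matrix (Fin q × Fin d) (Fin q × Fin d) ℝ :=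
  Hblk P Γ q - Kblk P Γ p q * (Lblk Γ p)⁻¹ * (Kblk P Γ p q)ᵀ

/-- Squared Euclidean norm of a finitely indexed vector. -/
def nrmSq {ι : Type*} [Fintype ι] (u : ι → ℝ) : ℝ := ∑ i, (u i) ^ 2

/-- Euclidean norm of a finitely indexed vector. -/
def nrm {ι : Type*} [Fintype ι] (u : ι → ℝ) : ℝ := Real.sqrt (nrmSq u)

/-- Squared Frobenius norm of a matrix. -/
def frobSq {ι κ : Type*} [Fintype ι] [Fintype κ] (M : Matrix ι κ ℝ) : ℝ :=
  ∑ i, ∑ j, (M i j) ^ 2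

/-- Frobenius norm of a matrix. -/
def frobNrm {ι κ : Type*} [Fintype ι] [Fintype κ] (M : Matrix ι κ ℝ) : ℝ :=
  Real.sqrt (frobSq M)

/-- The set of (real) eigenvalues of a matrix. -/
def eigSet {ι : Type*} [Fintype ι] (M : Matrix ι ι ℝ) : Set ℝ :=
  {r : ℝ | ∃ v : ι → ℝ, v ≠ 0 ∧ M.mulVec v = r • v}

/-- Largest eigenvalue. -/
def lamMax {ι : Type*} [Fintype ι] (M : Matrix ι ι ℝ) : ℝ := sSup (eigSet M)

/-- Smallest eigenvalue. -/
def lamMin {ι : Type*} [Fintype ι] (M : Matrix ι ι ℝ) : ℝ := sInf (eigSet M)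

variable {Ω : Type*}

/-- The regression vector `Φ_n = (X_n, …, X_{n-p+1}, U_{n-1}, …, U_{n-q})`
(with the convention that negative time indices are truncated at `0`). -/
def Phi {d : ℕ} (p q : ℕ) (X U : ℕ → Ω → Fin d → ℝ) (n : ℕ) (ω : Ω) :
    RegIdx d p q → ℝ :=
  Sum.elim (fun ib => X (n - (ib.1 : ℕ)) ω ib.2) (fun jb => U (n - 1 - (jb.1 : ℕ)) ω jb.2)

/-- `S_n = ∑_{k=0}^n Φ_k Φ_kᵗ + I`. -/
def SLS {d : ℕ} (p q : ℕ) (X U : ℕ → Ω → Fin d → ℝ) (n : ℕ) (ω : Ω) :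
    Matrix (RegIdx d p q) (RegIdx d p q) ℝ :=
  (∑ k ∈ Finset.range (n + 1), vecMulVec (Phi p q X U k ω) (Phi p q X U k ω)) + 1

/-- `s_n = ∑_{k=0}^n ‖Φ_k‖²`. -/
def sPhi {d : ℕ} (p q : ℕ) (X U : ℕ → Ω → Fin d → ℝ) (n : ℕ) (ω : Ω) : ℝ :=
  ∑ k ∈ Finset.range (n + 1), nrmSq (Phi p q X U k ω)

/-- The weights `a_n = (log s_n)^{-(1+γ)}`, with `a_n = 1` when `log s_n ≤ 1`. -/
def wt {d : ℕ} (p q : ℕ) (X U : ℕ → Ω → Fin d → ℝ) (γ : ℝ) (n : ℕ) (ω : Ω) : ℝ :=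
  if Real.log (sPhi p q X U n ω) ≤ 1 then 1
  else Real.log (sPhi p q X U n ω) ^ (-(1 + γ))

/-- `S_n(a) = ∑_{k=0}^n a_k Φ_k Φ_kᵗ + I`. -/
def SWLS {d : ℕ} (p q : ℕ) (X U : ℕ → Ω → Fin d → ℝ) (γ : ℝ) (n : ℕ) (ω : Ω) :
    Matrix (RegIdx d p q) (RegIdx d p q) ℝ :=
  (∑ k ∈ Finset.range (n + 1),
    wt p q X U γ k ω • vecMulVec (Phi p q X U k ω) (Phi p q X U k ω)) + 1

/-- Average cost matrix `C_n = n⁻¹ ∑_{k=1}^n (X_k - x_k)(X_k - x_k)ᵗ`. -/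
def Cmat {d : ℕ} (X xref : ℕ → Ω → Fin d → ℝ) (n : ℕ) (ω : Ω) : Mat d :=
  (n : ℝ)⁻¹ • ∑ k ∈ Finset.Icc 1 n, vecMulVec (X k ω - xref k ω) (X k ω - xref k ω)

/-- Empirical covariance `Γ_n = n⁻¹ ∑_{k=1}^n ε_k ε_kᵗ`. -/
def Gmat {d : ℕ} (ε : ℕ → Ω → Fin d → ℝ) (n : ℕ) (ω : Ω) : Mat d :=
  (n : ℝ)⁻¹ • ∑ k ∈ Finset.Icc 1 n, vecMulVec (ε k ω) (ε k ω)


/-!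
Write `R n` for the block column whose `i`-th block is `P (n - i)`; with truncated subtraction and
`P 0 = 0` this is `P_{n-i}` with the paper's convention `P_m = 0` for `m ≤ 0`. Reindexing the series
defining `H` shows `H = ∑_{n ≥ 0} R n Γ (R n)ᵀ`. The `k`-th block column of `K` is `R k Γ` and
`L = I ⊗ Γ`, so `K L⁻¹ Kᵀ = ∑_{k < p} R k Γ (R k)ᵀ`. Hence `S = ∑_{m ≥ 0} R (p + m) Γ (R (p + m))ᵀ`,
a convergent series of positive semidefinite matrices.

Convergence comes from causality. Over `ℂ⟦X⟧`, Cramer's rule turns `B(X) P(X) = A(X) - I`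
into `det B(X) · P(X) = adj B(X) (A(X) - I)`, and `det B` is a polynomial without zeros in the
closed unit disc. Its inverse is a constant times a product of the geometric series `(X - r)⁻¹` with `|r| > 1`,
so it lies in the ring of power series with absolutely summable coefficients, and so does `P(X)`.
-/

open scoped PowerSeries Polynomial

namespace PowerSeries

variable (R : Type*) [NormedRing R]

def summableCoeffs : Subring R⟦X⟧ where
  carrier := {f | Summable fun n => ‖coeff n f‖}
  zero_mem' := by simp [summable_zero]
  one_mem' := by
    refine summable_of_ne_finset_zero (s := {0}) fun n hn => ?_
    simp_all [coeff_one]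
  add_mem' {f g} hf hg := (hf.add hg).of_nonneg_of_le (fun _ => norm_nonneg _)
    fun n => by simpa only [map_add] using norm_add_le _ _
  neg_mem' {f} hf := by simpa using hf
  mul_mem' {f g} hf hg := by
    simpa [coeff_mul] using summable_norm_sum_mul_antidiagonal_of_summable_norm hf hg

variable {R}

theorem mem_summableCoeffs {f : R⟦X⟧} :
    f ∈ summableCoeffs R ↔ Summable fun n => ‖coeff n f‖ := Iff.rfl

theorem coe_mem_summableCoeffs (g : R[X]) : (g : R⟦X⟧) ∈ summableCoeffs R := by
  refine summable_of_ne_finset_zero (s := Finset.range (g.natDegree + 1)) fun n hn => ?_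
  rw [Polynomial.coeff_coe, g.coeff_eq_zero_of_natDegree_lt (by simpa using hn), norm_zero]

theorem C_mem_summableCoeffs (a : R) : C a ∈ summableCoeffs R := by
  simpa using coe_mem_summableCoeffs (Polynomial.C a)

variable {𝕜 : Type*} [NormedField 𝕜]

theorem invUnitsSub_mem_summableCoeffs {u : 𝕜ˣ} (hu : 1 < ‖(u : 𝕜)‖) :
    invUnitsSub u ∈ summableCoeffs 𝕜 := by
  have hq : ‖(u : 𝕜)‖⁻¹ < 1 := inv_lt_one_of_one_lt₀ hu
  refine ((summable_geometric_of_lt_one (by positivity) hq).mul_left ‖(u : 𝕜)‖⁻¹).congr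
    fun n => ?_
  simp [coeff_invUnitsSub, pow_succ, mul_comm]

theorem inv_X_sub_C_mem_summableCoeffs {r : 𝕜} (hr : 1 < ‖r‖) :
    (X - C r : 𝕜⟦X⟧)⁻¹ ∈ summableCoeffs 𝕜 := by
  have hr0 : r ≠ 0 := by rintro rfl; norm_num at hr
  have h : (X - C r : 𝕜⟦X⟧)⁻¹ = -invUnitsSub (Units.mk0 r hr0) := by
    rw [PowerSeries.inv_eq_iff_mul_eq_one (by simpa using hr0), neg_mul, ← mul_neg, neg_sub]
    exact invUnitsSub_mul_sub _
  exact h ▸ neg_mem (invUnitsSub_mem_summableCoeffs hr)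

theorem inv_multiset_prod_X_sub_C_mem_summableCoeffs {s : Multiset 𝕜}
    (hs : ∀ r ∈ s, 1 < ‖r‖) : (s.map fun r => (X - C r : 𝕜⟦X⟧)).prod⁻¹ ∈ summableCoeffs 𝕜 := by
  induction s using Multiset.induction_on with
  | empty => simp [one_mem]
  | cons r s ih =>
    rw [Multiset.map_cons, Multiset.prod_cons, PowerSeries.mul_inv_rev]
    exact mul_mem (ih fun x hx => hs x (Multiset.mem_cons_of_mem hx))
      (inv_X_sub_C_mem_summableCoeffs (hs r (Multiset.mem_cons_self r s)))

theorem inv_coe_mem_summableCoeffs [IsAlgClosed 𝕜] {g : 𝕜[X]}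
    (hg : ∀ z : 𝕜, ‖z‖ ≤ 1 → g.eval z ≠ 0) : (g : 𝕜⟦X⟧)⁻¹ ∈ summableCoeffs 𝕜 := by
  have hg0 : g ≠ 0 := fun h => hg 0 (by simp) (by simp [h])
  have hroots : ∀ r ∈ g.roots, 1 < ‖r‖ := fun r hr =>
    lt_of_not_ge fun h => hg r h ((Polynomial.mem_roots hg0).1 hr)
  rw [(IsAlgClosed.splits g).eq_prod_roots, ← Polynomial.coeToPowerSeries.ringHom_apply,
    map_mul, map_multiset_prod, Multiset.map_map]
  simp only [Polynomial.coeToPowerSeries.ringHom_apply, Polynomial.coe_C, Function.comp_def,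
    Polynomial.coe_sub, Polynomial.coe_X, PowerSeries.mul_inv_rev, C_inv]
  exact mul_mem (inv_multiset_prod_X_sub_C_mem_summableCoeffs hroots) (C_mem_summableCoeffs _)

theorem mem_summableCoeffs_of_polynomialMatrix_mul_eq {n : Type*} [Fintype n] [DecidableEq n]
    [IsAlgClosed 𝕜] {B : Matrix n n 𝕜[X]} (hB : ∀ z : 𝕜, ‖z‖ ≤ 1 → B.det.eval z ≠ 0)
    {F G : Matrix n n 𝕜⟦X⟧} (h : (B.map (↑) : Matrix n n 𝕜⟦X⟧) * F = G)
    (hG : ∀ x y, G x y ∈ summableCoeffs 𝕜) (x y : n) : F x y ∈ summableCoeffs 𝕜 := by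
  set ψ := Polynomial.coeToPowerSeries.ringHom (R := 𝕜)
  have hcramer : (B.det : 𝕜⟦X⟧) • F = (B.adjugate.map (↑) : Matrix n n 𝕜⟦X⟧) * G := by
    have hdet : ((B.det : 𝕜[X]) : 𝕜⟦X⟧) = (ψ.mapMatrix B).det := RingHom.map_det ψ B
    have hadj : (B.adjugate.map (↑) : Matrix n n 𝕜⟦X⟧) = (ψ.mapMatrix B).adjugate :=
      RingHom.map_adjugate ψ B
    have h' : ψ.mapMatrix B * F = G := h
    rw [hadj, ← h', ← Matrix.mul_assoc, adjugate_mul, hdet, smul_mul, Matrix.one_mul]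
  have hdet0 : constantCoeff (B.det : 𝕜⟦X⟧) ≠ 0 := by
    simpa [Polynomial.coeff_zero_eq_eval_zero] using hB 0 (by simp)
  have hentry : F x y = (B.det : 𝕜⟦X⟧)⁻¹ * ∑ c, (B.adjugate x c : 𝕜⟦X⟧) * G c y := by
    have := congrFun (congrFun hcramer x) y
    simp only [Matrix.smul_apply, smul_eq_mul, mul_apply, map_apply] at this
    rw [← this, ← mul_assoc, PowerSeries.inv_mul_cancel _ hdet0, one_mul]
  rw [hentry]
  exact mul_mem (inv_coe_mem_summableCoeffs hB)
    (sum_mem fun c _ => mul_mem (coe_mem_summableCoeffs _) (hG c y))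

end PowerSeries

section Causality

open PowerSeries

variable {d : ℕ}

def BpolyMatrix (B : ℕ → Mat d) (q : ℕ) : Matrix (Fin d) (Fin d) ℂ[X] :=
  1 + ∑ j ∈ Finset.Icc 1 q, (B j).map fun r => Polynomial.C (r : ℂ) * Polynomial.X ^ j

theorem BpolyMatrix_map_eval (B : ℕ → Mat d) (q : ℕ) (z : ℂ) :
    (BpolyMatrix B q).map (Polynomial.eval z) = Bpoly B q z := by
  change (Polynomial.evalRingHom z).mapMatrix (BpolyMatrix B q) = _
  simp only [BpolyMatrix, Bpoly, map_add, map_one, map_sum]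
  congr! 2 with j
  ext x y
  simp only [RingHom.mapMatrix_apply, Polynomial.coe_evalRingHom, map_apply, Polynomial.eval_mul,
    Polynomial.eval_C, Polynomial.eval_pow, Polynomial.eval_X, Matrix.smul_apply, smul_eq_mul]
  ring

theorem BpolyMatrix_map_coe (B : ℕ → Mat d) (q : ℕ) :
    ((BpolyMatrix B q).map (↑) : Matrix (Fin d) (Fin d) ℂ⟦X⟧) =
      1 + ∑ j ∈ Finset.Icc 1 q, (B j).map fun r => C (r : ℂ) * X ^ j := by
  change Polynomial.coeToPowerSeries.ringHom.mapMatrix (BpolyMatrix B q) = _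
  simp only [BpolyMatrix, map_add, map_one, map_sum]
  congr! 2 with j
  ext x y
  simp

def seriesMatrix {n : Type*} (f : ℕ → Matrix n n ℝ) : Matrix n n ℂ⟦X⟧ :=
  Matrix.of fun x y => PowerSeries.mk fun k => (f k x y : ℂ)

theorem BpolyMatrix_map_mul_seriesMatrix (B P : ℕ → Mat d) (q : ℕ) (hP0 : P 0 = 0) :
    ((BpolyMatrix B q).map (↑) : Matrix (Fin d) (Fin d) ℂ⟦X⟧) * seriesMatrix P =
      seriesMatrix fun k => P k + ∑ j ∈ Finset.Icc 1 q, B j * P (k - j) := by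
  ext x y k
  have hshift (j : ℕ) (c : Fin d) (r : ℂ) :
      coeff k (C r * X ^ j * PowerSeries.mk fun k => (P k c y : ℂ)) = r * P (k - j) c y := by
    rw [mul_assoc, coeff_C_mul, coeff_X_pow_mul']
    split_ifs with hjk
    · rw [coeff_mk]
    · simp [Nat.sub_eq_zero_of_le (not_le.1 hjk).le, hP0]
  simp only [BpolyMatrix_map_coe, seriesMatrix, Matrix.mul_apply, Matrix.add_apply,
    Matrix.one_apply, Matrix.sum_apply, map_apply, of_apply, add_mul, ite_mul, one_mul, zero_mul,
    sum_mul, sum_add_distrib, sum_ite_eq, mem_univ, ↓reduceIte, map_add, coeff_mk, map_sum, hshift,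
    Complex.ofReal_add, Complex.ofReal_sum, Complex.ofReal_mul, add_right_inj]
  exact Finset.sum_comm

theorem IsPSeq.summable {p q : ℕ} {A B P : ℕ → Mat d} (hP : IsPSeq A B q P)
    (hA : ∀ k, p < k → A k = 0) (hB : Causal B q) : Summable P := by
  have hG (x y : Fin d) :
      seriesMatrix (fun k => P k + ∑ j ∈ Finset.Icc 1 q, B j * P (k - j)) x y ∈
        summableCoeffs ℂ := by
    refine summable_of_ne_finset_zero (s := Finset.range (p + 1)) fun k hk => ?_
    have hk : p < k := by simpa using hk
    simp only [seriesMatrix, of_apply, coeff_mk]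
    rw [hP.2 k (by omega), hA k hk]
    simp
  have hdet (z : ℂ) (hz : ‖z‖ ≤ 1) : (BpolyMatrix B q).det.eval z ≠ 0 := by
    rw [← Polynomial.coe_evalRingHom, RingHom.map_det, RingHom.mapMatrix_apply,
      Polynomial.coe_evalRingHom, BpolyMatrix_map_eval]
    exact hB z hz
  refine Pi.summable.2 fun x => Pi.summable.2 fun y => Summable.of_norm ?_
  simpa [seriesMatrix, mem_summableCoeffs] using mem_summableCoeffs_of_polynomialMatrix_mul_eq
    hdet (BpolyMatrix_map_mul_seriesMatrix B P q hP.1) hG x y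

end Causality

theorem Summable.comp_nat_sub {G : Type*} [AddCommGroup G] [TopologicalSpace G]
    [IsTopologicalAddGroup G] {f : ℕ → G} (hf : Summable f) (i : ℕ) :
    Summable fun n => f (n - i) :=
  (summable_nat_add_iff i).1 (by simpa using hf)

theorem Matrix.summable_mul_mul {ι l m n o : Type*} [Fintype m] [Fintype n]
    {f : ι → Matrix l m ℝ} {g : ι → Matrix n o ℝ} (hf : Summable f) (hg : Summable g)
    (G : Matrix m n ℝ) : Summable fun i => f i * G * g i := by
  refine Pi.summable.2 fun a => Pi.summable.2 fun b => ?_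
  simp only [Matrix.mul_apply, Finset.sum_mul]
  refine summable_sum fun c _ => summable_sum fun e _ => ?_
  have hfe : Summable fun i => f i a e := Pi.summable.1 (Pi.summable.1 hf a) e
  have hgc : Summable fun i => g i c b := Pi.summable.1 (Pi.summable.1 hg c) b
  simpa only [mul_right_comm _ (G e c)] using
    (hfe.norm.mul_tendsto_const hgc.tendsto_cofinite_zero).mul_right (G e c)

theorem Matrix.posSemidef_of_hasSum {ι n R : Type*} [Fintype n] [Ring R] [PartialOrder R]
    [StarRing R] [TopologicalSpace R] [IsTopologicalRing R] [ContinuousStar R] [T2Space R]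
    [OrderClosedTopology R] [IsOrderedAddMonoid R] {f : ι → Matrix n n R} {S : Matrix n n R}
    (h : HasSum f S) (hf : ∀ i, (f i).PosSemidef) : S.PosSemidef := by
  refine .of_dotProduct_mulVec_nonneg ?_ fun x => ?_
  · refine (HasSum.unique ?_ h : Sᴴ = S)
    simpa only [(hf _).isHermitian.eq] using h.matrix_conjTranspose
  · let φ : Matrix n n R →+ R :=
      { toFun := fun M => star x ⬝ᵥ (M *ᵥ x)
        map_zero' := by simp
        map_add' := fun M N => by simp [add_mulVec, dotProduct_add] }
    have hφ : Continuous φ :=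
      show Continuous fun M : Matrix n n R => star x ⬝ᵥ (M *ᵥ x) by fun_prop
    exact (h.map φ hφ).nonneg fun i => (hf i).dotProduct_mulVec_nonneg x

theorem Matrix.mul_one_kronecker_mul {ι ι' κ n R : Type*} [Fintype κ] [Fintype n]
    [DecidableEq κ] [Semiring R] (M : Matrix ι (κ × n) R) (G : Matrix n n R)
    (N : Matrix (κ × n) ι' R) :
    M * ((1 : Matrix κ κ R) ⊗ₖ G) * N =
      ∑ k, M.submatrix id (fun c => (k, c)) * G * N.submatrix (fun c => (k, c)) id := by
  ext a b
  simp [Matrix.mul_apply, Fintype.sum_prod_type, Matrix.sum_apply, Matrix.one_apply, ite_mul,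
    Finset.sum_mul]

section Schur

variable {d : ℕ} {P : ℕ → Mat d} {Γ : Mat d}

def lagColumn (P : ℕ → Mat d) (q n : ℕ) : Matrix (Fin q × Fin d) (Fin d) ℝ :=
  Matrix.of fun ia c => P (n - ia.1) ia.2 c

theorem Hmat_sub_add_one (hP0 : P 0 = 0) (Γ : Mat d) {i j : ℕ} (hij : i ≤ j) :
    Hmat P Γ (j - i + 1) = ∑' n, P (n - i) * Γ * (P (n - j))ᵀ := by
  have hsupp : Function.support (fun n => P (n - i) * Γ * (P (n - j))ᵀ) ⊆
      Set.range (· + (j + 1)) := fun n hn =>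
    ⟨n - (j + 1), Nat.sub_add_cancel <| by
      by_contra h
      exact hn (by simp [Nat.sub_eq_zero_of_le (by omega : n ≤ j), hP0])⟩
  rw [← (add_left_injective (j + 1)).tsum_eq hsupp, Hmat]
  refine tsum_congr fun m => ?_
  rw [show m + (j + 1) - i = j - i + 1 + m by omega, show m + (j + 1) - j = m + 1 by omega]

theorem Hblk_apply (hP0 : P 0 = 0) (hΓ : Γᵀ = Γ) (q : ℕ) (i j : Fin q) (a b : Fin d) :
    Hblk P Γ q (i, a) (j, b) = (∑' n, P (n - i) * Γ * (P (n - j))ᵀ) a b := by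
  simp only [Hblk]
  split_ifs with hij
  · rw [Hmat_sub_add_one hP0 Γ hij]
  · rw [Hmat_sub_add_one hP0 Γ (le_of_not_ge hij)]
    change (∑' n, P (n - j) * Γ * (P (n - i))ᵀ)ᵀ a b = _
    simp_rw [transpose_tsum, transpose_mul, transpose_transpose, hΓ, Matrix.mul_assoc]

theorem hasSum_Hblk (hP0 : P 0 = 0) (hΓ : Γᵀ = Γ) (hP : Summable P) (q : ℕ) :
    HasSum (fun n => lagColumn P q n * Γ * (lagColumn P q n)ᵀ) (Hblk P Γ q) := by
  refine Pi.hasSum.2 fun ⟨i, a⟩ => Pi.hasSum.2 fun ⟨j, b⟩ => ?_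
  rw [Hblk_apply hP0 hΓ]
  exact Pi.hasSum.1 (Pi.hasSum.1 (summable_mul_mul (hP.comp_nat_sub i)
    (hP.comp_nat_sub j).matrix_transpose Γ).hasSum a) b

theorem Lblk_eq_one_kronecker (Γ : Mat d) (p : ℕ) :
    Lblk Γ p = (1 : Matrix (Fin p) (Fin p) ℝ) ⊗ₖ Γ := by
  ext ⟨k, c⟩ ⟨l, e⟩
  simp [Lblk, one_apply, ite_mul]

theorem Kblk_submatrix (hP0 : P 0 = 0) (Γ : Mat d) (p q : ℕ) (k : Fin p) :
    (Kblk P Γ p q).submatrix id (fun c => (k, c)) = lagColumn P q k * Γ := by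
  ext ⟨i, a⟩ e
  simp only [Kblk, submatrix_apply, id, mul_apply, lagColumn, of_apply]
  split_ifs with hik
  · rfl
  · simp [Nat.sub_eq_zero_of_le (not_lt.1 hik), hP0]

theorem Kblk_mul_inv_mul_transpose (hP0 : P 0 = 0) (hΓ : Γ.PosDef) (p q : ℕ) :
    Kblk P Γ p q * (Lblk Γ p)⁻¹ * (Kblk P Γ p q)ᵀ =
      ∑ n ∈ Finset.range p, lagColumn P q n * Γ * (lagColumn P q n)ᵀ := by
  have hdet : IsUnit Γ.det := hΓ.isUnit.map detMonoidHom
  rw [Lblk_eq_one_kronecker, inv_kronecker, inv_one, mul_one_kronecker_mul,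
    ← Fin.sum_univ_eq_sum_range (fun n => lagColumn P q n * Γ * (lagColumn P q n)ᵀ)]
  refine Finset.sum_congr rfl fun k _ => ?_
  rw [← transpose_submatrix, Kblk_submatrix hP0, transpose_mul,
    mul_nonsing_inv_cancel_right _ _ hdet, ← Matrix.mul_assoc,
    (isHermitian_iff_isSymm.1 hΓ.isHermitian).eq]

theorem hasSum_SchurS (hP0 : P 0 = 0) (hΓ : Γ.PosDef) (hP : Summable P) (p q : ℕ) :
    HasSum (fun m => lagColumn P q (p + m) * Γ * (lagColumn P q (p + m))ᵀ)
      (SchurS P Γ p q) := by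
  have hH := hasSum_Hblk hP0 (isHermitian_iff_isSymm.1 hΓ.isHermitian).eq hP q
  rw [SchurS, Kblk_mul_inv_mul_transpose hP0 hΓ]
  simpa only [add_comm p] using (hasSum_nat_add_iff' p).2 hH

end Schur

-- `i, j : Fin q` are 0-based: the paper's block `(i+1, j+1)` and summand `ℓ = m+1` give the
-- exponents `p - (i+1) + (m+1) = p + m - i` and `p + m - j`.
theorem schur_blocks_eq_tsum_general
    (d p q : ℕ)
    (A B P : ℕ → Mat d)
    (hA : ∀ k, k = 0 ∨ p < k → A k = 0)
    (hP : IsPSeq A B q P)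
    (hA1 : Causal B q)
    (Γ : Mat d) (hΓ : Γ.PosDef) :
    (∀ (i j : Fin q) (a b : Fin d),
        Summable (fun m : ℕ => |(P (p + m - (i : ℕ)) * Γ * (P (p + m - (j : ℕ)))ᵀ) a b|) ∧
        SchurS P Γ p q (i, a) (j, b) =
          ∑' m : ℕ, (P (p + m - (i : ℕ)) * Γ * (P (p + m - (j : ℕ)))ᵀ) a b) ∧
      (SchurS P Γ p q).PosSemidef := by
  have hS := hasSum_SchurS hP.1 hΓ (hP.summable (fun k hk => hA k (Or.inr hk)) hA1) p q
  have hentry (i j : Fin q) (a b : Fin d) :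
      HasSum (fun m => (P (p + m - (i : ℕ)) * Γ * (P (p + m - (j : ℕ)))ᵀ) a b)
        (SchurS P Γ p q (i, a) (j, b)) :=
    Pi.hasSum.1 (Pi.hasSum.1 hS (i, a)) (j, b)
  refine ⟨fun i j a b => ⟨(hentry i j a b).summable.abs, (hentry i j a b).tsum_eq.symm⟩,
    posSemidef_of_hasSum hS fun m => ?_⟩
  simpa using hΓ.posSemidef.mul_mul_conjTranspose_same (lagColumn P q (p + m))

/-- Under (A₁), the `(i,j)` block of the Schur complement
`S = H - K L⁻¹ Kᵗ` equals `∑_{ℓ=1}^∞ P_{p-i+ℓ} Γ P_{p-j+ℓ}ᵗ`, the series converging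
absolutely; in particular `S` is positive semidefinite.
(Here `i, j : Fin q` are 0-based, so the 1-based block `(i+1, j+1)` and summand
`ℓ = m+1` give the exponents `p - (i+1) + (m+1) = p + m - i`.) -/
theorem schur_blocks_eq_tsum
    (d p q : ℕ) (hd : 0 < d) (hp : 0 < p) (hq : 0 < q)
    (A B P : ℕ → Mat d)
    (hA : ∀ k, k = 0 ∨ p < k → A k = 0) (hB : ∀ k, k = 0 ∨ q < k → B k = 0)
    (hP : IsPSeq A B q P)
    (hA1 : Causal B q)
    (Γ : Mat d) (hΓ : Γ.PosDef) :
    (∀ (i j : Fin q) (a b : Fin d),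
        Summable (fun m : ℕ => |(P (p + m - (i : ℕ)) * Γ * (P (p + m - (j : ℕ)))ᵀ) a b|) ∧
        SchurS P Γ p q (i, a) (j, b) =
          ∑' m : ℕ, (P (p + m - (i : ℕ)) * Γ * (P (p + m - (j : ℕ)))ᵀ) a b) ∧
      (SchurS P Γ p q).PosSemidef :=
  schur_blocks_eq_tsum_general d p q A B P hA hP hA1 Γ hΓ

end
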